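/- arXiv:2412.16710 — 4 statements merged into one kernel-verified Lean document; each statement's English description precedes it below -/
import Mathlib

section
/- The function x ↦ (sinh x + x)/(sinh x − x) is strictly decreasing on the open interval (0, ∞). -/
open Real

lemma sinh_lt_mul_cosh {x : ℝ} (hx : 0 < x) : Real.sinh x < x * Real.cosh x := by
  have h : StrictMonoOn (fun t : ℝ => t * Real.cosh t - Real.sinh t) (Set.Ici 0) := by
    apply strictMonoOn_of_deriv_pos (convex_Ici 0)
    · fun_prop
    · intro t ht
      rw [interior_Ici] at ht
      have : HasDerivAt (fun t : ℝ => t * Real.cosh t - Real.sinh t)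
          (1 * Real.cosh t + t * Real.sinh t - Real.cosh t) t := by
        exact ((hasDerivAt_id t).mul (Real.hasDerivAt_cosh t)).sub (Real.hasDerivAt_sinh t)
      rw [this.deriv]
      have ht0 : 0 < t := ht
      have := Real.sinh_pos_iff.2 ht0
      nlinarith
  have := h (Set.self_mem_Ici) (Set.mem_Ici.2 hx.le) hx
  simpa using this

lemma strictMonoOn_sinh_div : StrictMonoOn (fun x : ℝ => Real.sinh x / x) (Set.Ioi 0) := by
  apply strictMonoOn_of_deriv_pos (convex_Ioi 0)
  · exact Real.continuous_sinh.continuousOn.div continuousOn_id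
      (fun x hx => ne_of_gt (by simpa using hx))
  · intro x hx
    rw [interior_Ioi] at hx
    have hx0 : x ≠ 0 := ne_of_gt hx
    have : HasDerivAt (fun x : ℝ => Real.sinh x / x)
        ((Real.cosh x * x - Real.sinh x * 1) / (x ^ 2)) x :=
      (Real.hasDerivAt_sinh x).div (hasDerivAt_id x) hx0
    rw [this.deriv]
    have h1 := sinh_lt_mul_cosh hx
    have h2 : (0:ℝ) < x ^ 2 := by positivity
    apply div_pos _ h2
    nlinarith

/-- The function `x ↦ (sinh x + x)/(sinh x − x)` is strictly decreasing on `(0, ∞)`. -/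
theorem strictAntiOn_sinh_ratio :
    StrictAntiOn (fun x : ℝ => (Real.sinh x + x) / (Real.sinh x - x)) (Set.Ioi 0) := by
  intro x hx y hy hxy
  have hx0 : (0:ℝ) < x := hx
  have hy0 : (0:ℝ) < y := hy
  have hdx : 0 < Real.sinh x - x := sub_pos.2 (Real.self_lt_sinh_iff.2 hx0)
  have hdy : 0 < Real.sinh y - y := sub_pos.2 (Real.self_lt_sinh_iff.2 hy0)
  have hmono := strictMonoOn_sinh_div hx hy hxy
  simp only at hmono ⊢
  rw [div_lt_div_iff₀ hx0 hy0] at hmono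
  rw [div_lt_div_iff₀ hdy hdx]
  nlinarith
end

section
/- Let α > 0 and T > 0, and let u(t) = e^{−αt} − e^{−α(T−t)} be the antisymmetric mode. Then ∫₀^T u′(t)² dt = α² · (sinh(αT) + αT)/(sinh(αT) − αT) · ∫₀^T u(t)² dt, where u′ denotes the derivative of u. -/
/-!
Expanding the squares, `u² = g - 2e^{-αT}` and `u'² = α²(g + 2e^{-αT})` with
`g(t) = e^{-2αt} + e^{-2α(T-t)}`, because the two exponentials of the mode multiply to the
constant `e^{-αT}`. Since `α ∫₀^T g = 1 - e^{-2αT} = 2 e^{-αT} sinh(αT)`, both integrals are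
explicit, and their ratio is the claimed one.
-/

open Real

theorem Real.sinh_eq_self_iff {x : ℝ} : sinh x = x ↔ x = 0 := by
  refine ⟨fun h => ?_, fun h => by simp [h]⟩
  rcases lt_trichotomy x 0 with hneg | hzero | hpos
  · exact absurd h (sinh_lt_self_iff.mpr hneg).ne
  · exact hzero
  · exact absurd h (self_lt_sinh_iff.mpr hpos).ne'

section AntisymmetricMode

variable (α T : ℝ)

noncomputable def antisymmetricMode (t : ℝ) : ℝ := exp (-α * t) - exp (-α * (T - t))

theorem exp_mul_exp_reflect (t : ℝ) : exp (-α * t) * exp (-α * (T - t)) = exp (-α * T) := by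
  rw [← exp_add]; ring_nf

theorem exp_neg_mul_sq (t : ℝ) : exp (-α * t) ^ 2 = exp (-2 * α * t) := by
  rw [← exp_nat_mul]; ring_nf

theorem hasDerivAt_antisymmetricMode (t : ℝ) :
    HasDerivAt (antisymmetricMode α T) (-α * (exp (-α * t) + exp (-α * (T - t)))) t := by
  have hdecay : HasDerivAt (fun t => exp (-α * t)) (exp (-α * t) * (-α * 1)) t :=
    ((hasDerivAt_id t).const_mul (-α)).exp
  have hgrowth : HasDerivAt (fun t => exp (-α * (T - t)))
      (exp (-α * (T - t)) * (-α * (0 - 1))) t :=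
    (((hasDerivAt_const t T).sub (hasDerivAt_id t)).const_mul (-α)).exp
  exact (hdecay.sub hgrowth).congr_deriv (by ring)

theorem deriv_antisymmetricMode :
    deriv (antisymmetricMode α T) = fun t => -α * (exp (-α * t) + exp (-α * (T - t))) :=
  funext fun t => (hasDerivAt_antisymmetricMode α T t).deriv

theorem antisymmetricMode_sq (t : ℝ) :
    antisymmetricMode α T t ^ 2
      = exp (-2 * α * t) + exp (-2 * α * (T - t)) - 2 * exp (-α * T) := by
  rw [antisymmetricMode, ← exp_mul_exp_reflect α T t, ← exp_neg_mul_sq, ← exp_neg_mul_sq]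
  ring

theorem deriv_antisymmetricMode_sq (t : ℝ) :
    deriv (antisymmetricMode α T) t ^ 2
      = α ^ 2 * (exp (-2 * α * t) + exp (-2 * α * (T - t)) + 2 * exp (-α * T)) := by
  rw [deriv_antisymmetricMode, ← exp_mul_exp_reflect α T t, ← exp_neg_mul_sq, ← exp_neg_mul_sq]
  ring

theorem mul_integral_exp_add_exp_reflect :
    α * ∫ t in (0 : ℝ)..T, (exp (-2 * α * t) + exp (-2 * α * (T - t)))
      = 2 * exp (-α * T) * sinh (α * T) := by
  have hF : ∀ t ∈ Set.uIcc 0 T,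
      HasDerivAt (fun t => (exp (-2 * α * (T - t)) - exp (-2 * α * t)) / 2)
        (α * (exp (-2 * α * t) + exp (-2 * α * (T - t)))) t := fun t _ => by
    have hgrowth : HasDerivAt (fun t => exp (-2 * α * (T - t)))
        (exp (-2 * α * (T - t)) * (-2 * α * (0 - 1))) t :=
      (((hasDerivAt_const t T).sub (hasDerivAt_id t)).const_mul (-2 * α)).exp
    have hdecay : HasDerivAt (fun t => exp (-2 * α * t)) (exp (-2 * α * t) * (-2 * α * 1)) t :=
      ((hasDerivAt_id t).const_mul (-2 * α)).exp
    exact ((hgrowth.sub hdecay).div_const 2).congr_deriv (by ring)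
  rw [← intervalIntegral.integral_const_mul,
    intervalIntegral.integral_eq_sub_of_hasDerivAt hF
      (Continuous.intervalIntegrable (by fun_prop) _ _)]
  have hinv : exp (-α * T) * exp (α * T) = 1 := by rw [← exp_add]; simp
  have hsq := exp_neg_mul_sq α T
  simp only [sub_self, sub_zero, mul_zero, exp_zero, sinh_eq, neg_mul] at hinv hsq ⊢
  linear_combination hsq - hinv

theorem integral_deriv_antisymmetricMode_sq :
    ∫ t in (0 : ℝ)..T, deriv (antisymmetricMode α T) t ^ 2
      = 2 * α * exp (-α * T) * (sinh (α * T) + α * T) := by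
  simp only [deriv_antisymmetricMode_sq]
  rw [intervalIntegral.integral_const_mul,
    intervalIntegral.integral_add (Continuous.intervalIntegrable (by fun_prop) _ _)
      intervalIntegrable_const, intervalIntegral.integral_const, smul_eq_mul]
  linear_combination α * mul_integral_exp_add_exp_reflect α T

theorem mul_integral_antisymmetricMode_sq :
    α * ∫ t in (0 : ℝ)..T, antisymmetricMode α T t ^ 2
      = 2 * exp (-α * T) * (sinh (α * T) - α * T) := by
  simp only [antisymmetricMode_sq]
  rw [intervalIntegral.integral_sub (Continuous.intervalIntegrable (by fun_prop) _ _)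
      intervalIntegrable_const, intervalIntegral.integral_const, smul_eq_mul]
  linear_combination mul_integral_exp_add_exp_reflect α T

end AntisymmetricMode

theorem antisymmetric_mode_energy_ratio_general (α T : ℝ)
    (u : ℝ → ℝ) (hu : u = fun t => Real.exp (-α*t) - Real.exp (-α*(T-t))) :
    ∫ t in (0:ℝ)..T, (deriv u t)^2
      = α^2 * ((Real.sinh (α*T) + α*T) / (Real.sinh (α*T) - α*T))
        * ∫ t in (0:ℝ)..T, (u t)^2 := by
  change u = antisymmetricMode α T at hu
  subst hu
  rw [integral_deriv_antisymmetricMode_sq]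
  rcases eq_or_ne (sinh (α * T)) (α * T) with hfixed | hmoved
  -- `sinh x = x` forces `x = 0`; the right-hand side then vanishes through `0 / 0 = 0`.
  · have hzero : α * T = 0 := sinh_eq_self_iff.mp hfixed
    rw [hfixed, hzero]
    simp
  · calc 2 * α * exp (-α * T) * (sinh (α * T) + α * T)
        = α * ((sinh (α * T) + α * T) / (sinh (α * T) - α * T))
            * (2 * exp (-α * T) * (sinh (α * T) - α * T)) := by
          field_simp [sub_ne_zero.mpr hmoved]
      _ = _ := by rw [← mul_integral_antisymmetricMode_sq]; ring

/-- For the antisymmetric mode `u(t) = e^{−αt} − e^{−α(T−t)}` with `α, T > 0`,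
`∫₀^T u′(t)² dt = α² (sinh(αT) + αT)/(sinh(αT) − αT) ∫₀^T u(t)² dt`. -/
theorem antisymmetric_mode_energy_ratio (α T : ℝ) (hα : 0 < α) (hT : 0 < T)
    (u : ℝ → ℝ) (hu : u = fun t => Real.exp (-α*t) - Real.exp (-α*(T-t))) :
    ∫ t in (0:ℝ)..T, (deriv u t)^2
      = α^2 * ((Real.sinh (α*T) + α*T) / (Real.sinh (α*T) - α*T))
        * ∫ t in (0:ℝ)..T, (u t)^2 :=
  antisymmetric_mode_energy_ratio_general α T u hu
end

section
/- Let α > 0 and T > 0, and let u(t) = e^{−αt} + e^{−α(T−t)} be the symmetric mode. Then ∫₀^T u′(t)² dt = α² · (sinh(αT) − αT)/(sinh(αT) + αT) · ∫₀^T u(t)² dt; in particular ∫₀^T u′(t)² dt ≤ α² ∫₀^T u(t)² dt, where u′ denotes the derivative of u. -/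
open Real

/-!
The mode `u_α(t) = e^{-αt} + e^{-α(T-t)}` satisfies `u_α² = u_{2α} + 2e^{-αT}` and
`u_α'² = α² (u_{2α} - 2e^{-αT})`, the cross term `e^{-αt} e^{-α(T-t)} = e^{-αT}` being constant.
Since `∫₀^T u_{2α} = 2 e^{-αT} sinh(αT) / α`, both energies are `2 e^{-αT}` times
`sinh(αT)/α + T` and `α² (sinh(αT)/α - T)` respectively.
-/

theorem one_sub_exp_neg_two_mul (x : ℝ) : 1 - exp (-(2 * x)) = 2 * exp (-x) * sinh x := by
  have h : exp (-x) * exp x = 1 := by rw [← exp_add, neg_add_cancel, exp_zero]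
  rw [sinh_eq, show -(2 * x) = -x + -x by ring, exp_add]
  linear_combination -h

theorem integral_exp_mul {c : ℝ} (hc : c ≠ 0) (a b : ℝ) :
    ∫ x in a..b, exp (c * x) = (exp (c * b) - exp (c * a)) / c := by
  rw [intervalIntegral.integral_comp_mul_left exp hc, integral_exp, smul_eq_mul, inv_mul_eq_div]

noncomputable def symmetricMode (α T t : ℝ) : ℝ :=
  exp (-α * t) + exp (-α * (T - t))

namespace symmetricMode

variable (α T : ℝ)

theorem hasDerivAt (t : ℝ) :
    HasDerivAt (symmetricMode α T) (α * (exp (-α * (T - t)) - exp (-α * t))) t := by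
  have h₁ := ((hasDerivAt_id t).const_mul (-α)).exp
  have h₂ := (((hasDerivAt_id t).const_sub T).const_mul (-α)).exp
  exact (h₁.add h₂).congr_deriv (by simp only [id]; ring)

theorem deriv_eq : deriv (symmetricMode α T) =
    fun t => α * (exp (-α * (T - t)) - exp (-α * t)) :=
  funext fun t => (hasDerivAt α T t).deriv

theorem exp_mul_exp (t : ℝ) : exp (-α * t) * exp (-α * (T - t)) = exp (-(α * T)) := by
  rw [← exp_add]
  ring_nf

theorem two_mul_eq_sq_add_sq (t : ℝ) :
    symmetricMode (2 * α) T t = exp (-α * t) ^ 2 + exp (-α * (T - t)) ^ 2 := by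
  simp only [symmetricMode, ← exp_nat_mul]
  ring_nf

theorem sq_eq (t : ℝ) :
    symmetricMode α T t ^ 2 = symmetricMode (2 * α) T t + 2 * exp (-(α * T)) := by
  rw [two_mul_eq_sq_add_sq, ← exp_mul_exp α T t, symmetricMode]
  ring

theorem deriv_sq_eq (t : ℝ) :
    deriv (symmetricMode α T) t ^ 2
      = α ^ 2 * (symmetricMode (2 * α) T t - 2 * exp (-(α * T))) := by
  rw [deriv_eq, two_mul_eq_sq_add_sq, ← exp_mul_exp α T t]
  ring

theorem continuous : Continuous (symmetricMode α T) := by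
  unfold symmetricMode
  fun_prop

variable {α}

theorem integral (hα : α ≠ 0) :
    ∫ t in (0 : ℝ)..T, symmetricMode α T t = 2 * (1 - exp (-α * T)) / α := by
  have h₁ : Continuous fun t => exp (-α * t) := by fun_prop
  have h₂ : Continuous fun t => exp (-α * (T - t)) := by fun_prop
  unfold symmetricMode
  rw [intervalIntegral.integral_add (h₁.intervalIntegrable _ _) (h₂.intervalIntegrable _ _),
    intervalIntegral.integral_comp_sub_left (fun t => exp (-α * t)), sub_self, sub_zero,
    integral_exp_mul (neg_ne_zero.mpr hα), mul_zero, exp_zero]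
  field_simp
  ring

theorem integral_sq (hα : α ≠ 0) :
    ∫ t in (0 : ℝ)..T, symmetricMode α T t ^ 2
      = 2 * exp (-(α * T)) * (sinh (α * T) / α + T) := by
  simp_rw [sq_eq]
  rw [intervalIntegral.integral_add ((continuous _ T).intervalIntegrable _ _)
      intervalIntegrable_const,
    intervalIntegral.integral_const, integral T (mul_ne_zero two_ne_zero hα),
    show -(2 * α) * T = -(2 * (α * T)) by ring, one_sub_exp_neg_two_mul, sub_zero, smul_eq_mul]
  field_simp

theorem integral_deriv_sq (hα : α ≠ 0) :
    ∫ t in (0 : ℝ)..T, deriv (symmetricMode α T) t ^ 2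
      = 2 * α ^ 2 * exp (-(α * T)) * (sinh (α * T) / α - T) := by
  simp_rw [deriv_sq_eq]
  rw [intervalIntegral.integral_const_mul,
    intervalIntegral.integral_sub ((continuous _ T).intervalIntegrable _ _)
      intervalIntegrable_const,
    intervalIntegral.integral_const, integral T (mul_ne_zero two_ne_zero hα),
    show -(2 * α) * T = -(2 * (α * T)) by ring, one_sub_exp_neg_two_mul, sub_zero, smul_eq_mul]
  field_simp

end symmetricMode

/-- For the symmetric mode `u(t) = e^{−αt} + e^{−α(T−t)}` with `α, T > 0`,
`∫₀^T u′(t)² dt = α² (sinh(αT) − αT)/(sinh(αT) + αT) ∫₀^T u(t)² dt`; in particular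
`∫₀^T u′(t)² dt ≤ α² ∫₀^T u(t)² dt`. -/
theorem symmetric_mode_energy_ratio (α T : ℝ) (hα : 0 < α) (hT : 0 < T)
    (u : ℝ → ℝ) (hu : u = fun t => Real.exp (-α*t) + Real.exp (-α*(T-t))) :
    (∫ t in (0:ℝ)..T, (deriv u t)^2
      = α^2 * ((Real.sinh (α*T) - α*T) / (Real.sinh (α*T) + α*T))
        * ∫ t in (0:ℝ)..T, (u t)^2)
    ∧ (∫ t in (0:ℝ)..T, (deriv u t)^2 ≤ α^2 * ∫ t in (0:ℝ)..T, (u t)^2) := by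
  obtain rfl : u = symmetricMode α T := hu
  rw [symmetricMode.integral_deriv_sq T hα.ne', symmetricMode.integral_sq T hα.ne']
  constructor
  · field_simp
  · have : 0 ≤ α ^ 2 * exp (-(α * T)) * T := by positivity
    linarith
end

section
/- Let 0 < a ≤ b and let u : ℝ → ℝ be continuously differentiable on [0,b]. Define φ(t) = (1 − t/a)² for t ∈ [0,a] and φ(t) = 0 for t > a, so that φ is C¹ on [0,b] with derivative φ′(t) = −(2/a)(1 − t/a) on [0,a] and φ′(t) = 0 for t > a, and let ψ(t) = (2/a²)·1_{[0,a]}(t). Then (∫₀^b ((1 − φ(t))u′(t) − 2φ′(t)u(t) − ψ(t)∫₀^t u(s) ds)² dt)^{1/2} ≤ (∫₀^b u′(t)² dt)^{1/2} + (4 + √2)·a^{−1}·(∫₀^b u(t)² dt)^{1/2}. -/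
/-!
Write `ẇ = f₁ - f₂ - f₃` with `f₁ = (1 - φ) u'`, `f₂ = 2 φ' u`, `f₃ = ψ V`, `V = ∫₀^· u`.
Minkowski's inequality in `L²(0, b)` bounds `‖ẇ‖` by `‖f₁‖ + ‖f₂‖ + ‖f₃‖`. The first two terms
are controlled pointwise by `|1 - φ| ≤ 1` and `|φ'| ≤ 2/a`. For the third, Cauchy–Schwarz gives
`V(t)² ≤ t ‖u‖²`, hence `‖ψ V‖² ≤ ‖u‖² ∫₀^b ψ(t)² t dt = 2 ‖u‖² / a²`.
-/

open Real MeasureTheory Set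

namespace MeasureTheory

variable {α : Type*} [MeasurableSpace α] {μ : Measure α} {f g : α → ℝ}

theorem MemLp.sqrt_integral_sq_eq_toReal_eLpNorm (hf : MemLp f 2 μ) :
    √(∫ x, f x ^ 2 ∂μ) = (eLpNorm f 2 μ).toReal := by
  rw [hf.eLpNorm_eq_integral_rpow_norm two_ne_zero ENNReal.ofNat_ne_top,
    ENNReal.toReal_ofReal (by positivity), sqrt_eq_rpow]
  simp [one_div]

theorem sqrt_integral_sq_sub_le (hf : MemLp f 2 μ) (hg : MemLp g 2 μ) :
    √(∫ x, (f x - g x) ^ 2 ∂μ) ≤ √(∫ x, f x ^ 2 ∂μ) + √(∫ x, g x ^ 2 ∂μ) := by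
  have hfg := (hf.sub hg).sqrt_integral_sq_eq_toReal_eLpNorm
  simp only [Pi.sub_apply] at hfg
  rw [hfg, hf.sqrt_integral_sq_eq_toReal_eLpNorm,
    hg.sqrt_integral_sq_eq_toReal_eLpNorm]
  exact ENNReal.toReal_le_add (eLpNorm_sub_le hf.1 hg.1 one_le_two) hf.eLpNorm_ne_top
    hg.eLpNorm_ne_top

theorem memLp_two_of_sq_le (hf : AEStronglyMeasurable f μ) (hg : Integrable g μ)
    (h : ∀ᵐ x ∂μ, f x ^ 2 ≤ g x) : MemLp f 2 μ :=
  (memLp_two_iff_integrable_sq hf).2 <|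
    hg.mono' (hf.pow 2) (h.mono fun x hx => by rwa [norm_of_nonneg (sq_nonneg _)])

theorem sqrt_integral_sq_le_of_sq_le (hg : Integrable g μ) (h : ∀ᵐ x ∂μ, f x ^ 2 ≤ g x) :
    √(∫ x, f x ^ 2 ∂μ) ≤ √(∫ x, g x ∂μ) :=
  sqrt_le_sqrt (integral_mono_of_nonneg (ae_of_all _ fun _ => sq_nonneg _) hg h)

theorem sq_integral_le_measureReal_mul_integral_sq [IsFiniteMeasure μ] (hf : MemLp f 2 μ) :
    (∫ x, f x ∂μ) ^ 2 ≤ μ.real univ * ∫ x, f x ^ 2 ∂μ := by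
  have holder := integral_mul_norm_le_Lp_mul_Lq (μ := μ) Real.HolderConjugate.two_two
    (f := f) (g := fun _ => (1 : ℝ)) (by simpa using hf) (by simpa using memLp_const 1)
  simp only [norm_one, one_pow, mul_one, integral_const, smul_eq_mul, norm_eq_abs, rpow_two,
    sq_abs, ← sqrt_eq_rpow] at holder
  calc (∫ x, f x ∂μ) ^ 2 = |∫ x, f x ∂μ| ^ 2 := (sq_abs _).symm
    _ ≤ (√(∫ x, f x ^ 2 ∂μ) * √(μ.real univ)) ^ 2 :=
      pow_le_pow_left₀ (abs_nonneg _) (abs_integral_le_integral_abs.trans holder) 2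
    _ = μ.real univ * ∫ x, f x ^ 2 ∂μ := by
      rw [mul_pow, sq_sqrt (integral_nonneg fun _ => sq_nonneg _), sq_sqrt measureReal_nonneg,
        mul_comm]

theorem sqrt_integral_sq_sub_sub_le_of_sq_le {f₁ f₂ f₃ g₁ g₂ g₃ : α → ℝ}
    (hf₁ : AEStronglyMeasurable f₁ μ) (hf₂ : AEStronglyMeasurable f₂ μ)
    (hf₃ : AEStronglyMeasurable f₃ μ) (hg₁ : Integrable g₁ μ) (hg₂ : Integrable g₂ μ)
    (hg₃ : Integrable g₃ μ) (h₁ : ∀ᵐ x ∂μ, f₁ x ^ 2 ≤ g₁ x) (h₂ : ∀ᵐ x ∂μ, f₂ x ^ 2 ≤ g₂ x)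
    (h₃ : ∀ᵐ x ∂μ, f₃ x ^ 2 ≤ g₃ x) :
    √(∫ x, (f₁ x - f₂ x - f₃ x) ^ 2 ∂μ)
      ≤ √(∫ x, g₁ x ∂μ) + √(∫ x, g₂ x ∂μ) + √(∫ x, g₃ x ∂μ) := by
  have m₁ := memLp_two_of_sq_le hf₁ hg₁ h₁
  have m₂ := memLp_two_of_sq_le hf₂ hg₂ h₂
  calc √(∫ x, (f₁ x - f₂ x - f₃ x) ^ 2 ∂μ)
      ≤ √(∫ x, (f₁ x - f₂ x) ^ 2 ∂μ) + √(∫ x, f₃ x ^ 2 ∂μ) :=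
        sqrt_integral_sq_sub_le (m₁.sub m₂) (memLp_two_of_sq_le hf₃ hg₃ h₃)
    _ ≤ √(∫ x, f₁ x ^ 2 ∂μ) + √(∫ x, f₂ x ^ 2 ∂μ) + √(∫ x, f₃ x ^ 2 ∂μ) := by
        gcongr; exact sqrt_integral_sq_sub_le m₁ m₂
    _ ≤ _ := add_le_add (add_le_add (sqrt_integral_sq_le_of_sq_le hg₁ h₁)
        (sqrt_integral_sq_le_of_sq_le hg₂ h₂)) (sqrt_integral_sq_le_of_sq_le hg₃ h₃)

end MeasureTheory

theorem sq_intervalIntegral_le {u : ℝ → ℝ} {s t : ℝ} (hst : s ≤ t)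
    (hu : MemLp u 2 (volume.restrict (Ioc s t))) :
    (∫ x in s..t, u x) ^ 2 ≤ (t - s) * ∫ x in s..t, u x ^ 2 := by
  simpa [intervalIntegral.integral_of_le hst, Measure.real, hst]
    using sq_integral_le_measureReal_mul_integral_sq hu

theorem sq_intervalIntegral_le_mul_setIntegral_sq {u : ℝ → ℝ} {s t b : ℝ}
    (hu : MemLp u 2 (volume.restrict (Ioc s b))) (ht : t ∈ Icc s b) :
    (∫ x in s..t, u x) ^ 2 ≤ (t - s) * ∫ x in Ioc s b, u x ^ 2 := by
  have hsub : Ioc s t ⊆ Ioc s b := Ioc_subset_Ioc_right ht.2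
  calc (∫ x in s..t, u x) ^ 2 ≤ (t - s) * ∫ x in s..t, u x ^ 2 :=
        sq_intervalIntegral_le ht.1 (hu.mono_measure (Measure.restrict_mono hsub le_rfl))
    _ ≤ (t - s) * ∫ x in Ioc s b, u x ^ 2 := by
        rw [intervalIntegral.integral_of_le ht.1]
        exact mul_le_mul_of_nonneg_left (setIntegral_mono_set hu.integrable_sq
          (ae_of_all _ fun _ => sq_nonneg _) hsub.eventuallyLE) (sub_nonneg.2 ht.1)

theorem ContinuousOn.memLp_two_restrict_Ioc {u : ℝ → ℝ} {s t : ℝ}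
    (hu : ContinuousOn u (Icc s t)) :
    MemLp u 2 (volume.restrict (Ioc s t)) :=
  memLp_two_of_sq_le ((hu.mono Ioc_subset_Icc_self).aestronglyMeasurable measurableSet_Ioc)
    ((hu.pow 2).integrableOn_Icc.mono_set Ioc_subset_Icc_self) (ae_of_all _ fun _ => le_rfl)

theorem sq_mul_intervalIntegral_le {u : ℝ → ℝ} {b t : ℝ}
    (hu : MemLp u 2 (volume.restrict (Ioc 0 b))) (ht : t ∈ Ioc 0 b) (c : ℝ) :
    (c * ∫ s in (0 : ℝ)..t, u s) ^ 2 ≤ (∫ s in Ioc 0 b, u s ^ 2) * (c ^ 2 * t) := by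
  have hVt := sq_intervalIntegral_le_mul_setIntegral_sq hu (Ioc_subset_Icc_self ht)
  rw [sub_zero] at hVt
  calc _ = c ^ 2 * (∫ s in (0 : ℝ)..t, u s) ^ 2 := mul_pow _ _ _
    _ ≤ c ^ 2 * (t * ∫ s in Ioc 0 b, u s ^ 2) := by gcongr
    _ = _ := by ring

theorem sq_mul_le_of_abs_le {x y c : ℝ} (h : |x| ≤ c) : (x * y) ^ 2 ≤ c ^ 2 * y ^ 2 := by
  rw [mul_pow, ← sq_abs x]
  gcongr

/-- `ẇ` for `w = (1 - φ) u - φ' ∫₀^· u`, when `ψ = φ''`. -/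
noncomputable def wdot (φ φ' ψ u u' : ℝ → ℝ) (t : ℝ) : ℝ :=
  (1 - φ t) * u' t - 2 * φ' t * u t - ψ t * ∫ s in (0 : ℝ)..t, u s

theorem sqrt_integral_wdot_sq_le {b K L : ℝ} {φ φ' ψ u u' : ℝ → ℝ} (hb : 0 ≤ b) (hK : 0 ≤ K)
    (hL : 0 ≤ L) (hφ : Measurable φ) (hφ' : Measurable φ') (hψ : Measurable ψ)
    (hu : ContinuousOn u (Icc 0 b)) (hu' : ContinuousOn u' (Icc 0 b))
    (hφ_le : ∀ t ∈ Ioc 0 b, |1 - φ t| ≤ 1) (hφ'_le : ∀ t ∈ Ioc 0 b, |φ' t| ≤ K)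
    (hψ_int : IntervalIntegrable (fun t => ψ t ^ 2 * t) volume 0 b)
    (hψ_le : ∫ t in 0..b, ψ t ^ 2 * t ≤ L ^ 2) :
    √(∫ t in 0..b, wdot φ φ' ψ u u' t ^ 2)
      ≤ √(∫ t in 0..b, u' t ^ 2) + (2 * K + L) * √(∫ t in 0..b, u t ^ 2) := by
  rw [intervalIntegrable_iff_integrableOn_Ioc_of_le hb] at hψ_int
  simp only [intervalIntegral.integral_of_le hb, wdot] at hψ_le ⊢
  have hmu := hu.memLp_two_restrict_Ioc
  have hmu' := hu'.memLp_two_restrict_Ioc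
  set U := ∫ t in Ioc 0 b, u t ^ 2
  have hV := intervalIntegral.continuousOn_primitive_interval (f := u) (μ := volume)
    (by rw [uIcc_of_le hb]; exact hu.integrableOn_Icc)
  rw [uIcc_of_le hb] at hV
  have hmem : ∀ᵐ t ∂volume.restrict (Ioc 0 b), t ∈ Ioc 0 b := ae_restrict_mem measurableSet_Ioc
  have hminkowski := sqrt_integral_sq_sub_sub_le_of_sq_le (f₁ := fun t => (1 - φ t) * u' t)
    (f₂ := fun t => 2 * φ' t * u t) (f₃ := fun t => ψ t * ∫ s in (0 : ℝ)..t, u s)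
    ((hφ.const_sub 1).aestronglyMeasurable.mul hmu'.1)
    ((hφ'.const_mul 2).aestronglyMeasurable.mul hmu.1)
    (hψ.aestronglyMeasurable.mul
      ((hV.mono Ioc_subset_Icc_self).aestronglyMeasurable measurableSet_Ioc))
    hmu'.integrable_sq (hmu.integrable_sq.const_mul ((2 * K) ^ 2)) (hψ_int.const_mul U)
    (hmem.mono fun t ht => by simpa using sq_mul_le_of_abs_le (y := u' t) (hφ_le t ht))
    (hmem.mono fun t ht => sq_mul_le_of_abs_le (by
      rw [abs_mul, abs_two]; exact mul_le_mul_of_nonneg_left (hφ'_le t ht) two_pos.le))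
    (hmem.mono fun t ht => sq_mul_intervalIntegral_le hmu ht (ψ t))
  have hU : 0 ≤ U := setIntegral_nonneg measurableSet_Ioc fun _ _ => sq_nonneg _
  have hψ_bound : √(U * ∫ t in Ioc 0 b, ψ t ^ 2 * t) ≤ L * √U :=
    calc _ ≤ √(U * L ^ 2) := sqrt_le_sqrt (mul_le_mul_of_nonneg_left hψ_le hU)
      _ = L * √U := by rw [sqrt_mul hU, sqrt_sq hL, mul_comm]
  rw [integral_const_mul, integral_const_mul, sqrt_mul (sq_nonneg _), sqrt_sq (by positivity)]
    at hminkowski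
  linarith

section Cutoff

variable {a b t : ℝ}

theorem abs_one_sub_cutoff_le (ha : 0 < a) (ht : 0 ≤ t) :
    |1 - (if t ≤ a then (1 - t / a) ^ 2 else 0)| ≤ 1 := by
  split_ifs with hta
  · have h₀ : 0 ≤ t / a := div_nonneg ht ha.le
    have h₁ : t / a ≤ 1 := (div_le_one ha).2 hta
    rw [abs_le]
    constructor <;> nlinarith
  · simp

theorem abs_cutoff_deriv_le (ha : 0 < a) (ht : 0 ≤ t) :
    |if t ≤ a then -(2 / a) * (1 - t / a) else 0| ≤ 2 / a := by
  split_ifs with hta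
  · rw [abs_mul, abs_neg, abs_of_pos (by positivity),
      abs_of_nonneg (sub_nonneg.2 ((div_le_one ha).2 hta))]
    exact mul_le_of_le_one_right (by positivity) (by linarith [div_nonneg ht ha.le])
  · simp only [abs_zero]
    positivity

theorem indicator_sq_mul_eq (a c t : ℝ) :
    (Icc 0 a).indicator (fun _ => c) t ^ 2 * t = (Icc 0 a).indicator (fun t => c ^ 2 * t) t := by
  by_cases h : t ∈ Icc 0 a <;> simp [h]

theorem intervalIntegrable_indicator_sq_mul (hb : 0 ≤ b) (a c : ℝ) :
    IntervalIntegrable (fun t => (Icc 0 a).indicator (fun _ => c) t ^ 2 * t) volume 0 b := by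
  simp only [indicator_sq_mul_eq]
  rw [intervalIntegrable_iff_integrableOn_Ioc_of_le hb]
  exact (continuous_const.mul continuous_id).integrableOn_Ioc.indicator measurableSet_Icc

theorem integral_indicator_sq_mul (ha : 0 < a) (hab : a ≤ b) :
    ∫ t in 0..b, (Icc 0 a).indicator (fun _ => 2 / a ^ 2) t ^ 2 * t = 2 / a ^ 2 := by
  have hIoc : Icc 0 a ∩ Ioc 0 b = Ioc 0 a := by
    ext t
    simp only [mem_inter_iff, mem_Icc, mem_Ioc]
    constructor
    · rintro ⟨⟨-, hta⟩, ht, -⟩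
      exact ⟨ht, hta⟩
    · rintro ⟨ht, hta⟩
      exact ⟨⟨ht.le, hta⟩, ht, hta.trans hab⟩
  simp only [indicator_sq_mul_eq]
  rw [intervalIntegral.integral_of_le (ha.le.trans hab), integral_indicator measurableSet_Icc,
    Measure.restrict_restrict measurableSet_Icc, hIoc, ← intervalIntegral.integral_of_le ha.le,
    intervalIntegral.integral_const_mul, integral_id]
  field_simp
  ring

end Cutoff

/-- Triangle-inequality `L²` estimate for `ẇ = (1 − φ)u′ − 2φ′u − ψ ∫₀^· u`, where
`φ(t) = (1 − t/a)² 1_{[0,a]}(t)`, `φ′(t) = −(2/a)(1 − t/a) 1_{[0,a]}(t)` and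
`ψ = (2/a²) 1_{[0,a]}`:
`‖ẇ‖_{L²(0,b)} ≤ ‖u′‖_{L²(0,b)} + (4 + √2) a⁻¹ ‖u‖_{L²(0,b)}`. -/
theorem wdot_L2_triangle_bound (a b : ℝ) (ha : 0 < a) (hab : a ≤ b)
    (u u' : ℝ → ℝ)
    (hu : ∀ t ∈ Set.Icc (0:ℝ) b, HasDerivWithinAt u (u' t) (Set.Icc 0 b) t)
    (hu' : ContinuousOn u' (Set.Icc 0 b))
    (φ φ' ψ : ℝ → ℝ)
    (hφ : ∀ t, φ t = if t ≤ a then (1 - t/a)^2 else 0)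
    (hφ' : ∀ t, φ' t = if t ≤ a then -(2/a) * (1 - t/a) else 0)
    (hψ : ∀ t, ψ t = Set.indicator (Set.Icc 0 a) (fun _ => 2/a^2) t) :
    Real.sqrt (∫ t in (0:ℝ)..b,
        ((1 - φ t) * u' t - 2 * φ' t * u t - ψ t * ∫ s in (0:ℝ)..t, u s)^2)
      ≤ Real.sqrt (∫ t in (0:ℝ)..b, (u' t)^2)
        + (4 + Real.sqrt 2) * a⁻¹ * Real.sqrt (∫ t in (0:ℝ)..b, (u t)^2) := by
  obtain rfl : φ = _ := funext hφ
  obtain rfl : φ' = _ := funext hφ'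
  obtain rfl : ψ = _ := funext hψ
  have hb : 0 ≤ b := ha.le.trans hab
  have key := sqrt_integral_wdot_sq_le (K := 2 / a) (L := √2 / a) hb (by positivity)
    (by positivity)
    (Measurable.ite measurableSet_Iic (by fun_prop) measurable_const)
    (Measurable.ite measurableSet_Iic (by fun_prop) measurable_const)
    (measurable_const.indicator measurableSet_Icc) (fun t ht => (hu t ht).continuousWithinAt) hu'
    (fun t ht => abs_one_sub_cutoff_le ha ht.1.le) (fun t ht => abs_cutoff_deriv_le ha ht.1.le)
    (intervalIntegrable_indicator_sq_mul hb a _)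
    (by rw [integral_indicator_sq_mul ha hab, div_pow, sq_sqrt zero_le_two])
  refine key.trans_eq ?_
  ring
end
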